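/- For all real numbers Ω, A, B, D, α, the vorticity function ω(θ,φ) = Ω·cosθ + A·√(5/(16π))·(3cos²θ − 1) + B·√(15/(16π))·sin(2θ)·cos(φ + α) + D·√(15/(16π))·sin²θ·cos(2φ) satisfies ∫_{S²} ω³ dS = (A·(10A² + 15B² − 30D² + 56Ω²π) + 15√3·B²·D·cos(2α)) / (14√(5π)). -/

import Mathlib

open Real intervalIntegral

/-- The vorticity used in the zonal case, in spherical coordinates:
`Ω cosθ + A √(5/(16π))(3cos²θ − 1) + B √(15/(16π)) sin(2θ) cos(φ + α)
 + D √(15/(16π)) sin²θ cos(2φ)`. -/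
noncomputable def vortZ (Ω A B D α θ φ : ℝ) : ℝ :=
  Ω * Real.cos θ +
  A * (Real.sqrt (5 / (16 * π)) * (3 * (Real.cos θ) ^ 2 - 1)) +
  B * (Real.sqrt (15 / (16 * π)) * Real.sin (2 * θ) * Real.cos (φ + α)) +
  D * (Real.sqrt (15 / (16 * π)) * (Real.sin θ) ^ 2 * Real.cos (2 * φ))

/-!
Integrate over the longitude first (Fubini). Writing `ω = X + Y cos(φ + α) + Z cos(2φ)` with
`X, Y, Z` depending on `θ` only, product-to-sum formulas show that the `φ`-integral of `ω³` over
a period is `π (2X³ + 3X(Y² + Z²) + (3/2) Y² Z cos 2α)`; the last term is the only resonance,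
coming from `cos²(φ + α) cos 2φ`. Since `Y²` and `Z` are multiples of `sin²θ cos²θ` and `sin²θ`,
the result is a polynomial in `cos θ`, and the substitution `u = cos θ` turns the remaining
`θ`-integral into the integral of a polynomial over `[-1, 1]`.
-/

theorem intervalIntegral_integral_swap_of_continuous {E : Type*} [NormedAddCommGroup E]
    [NormedSpace ℝ E] {f : ℝ → ℝ → E} (hf : Continuous (Function.uncurry f))
    {a b c d : ℝ} (hab : a ≤ b) (hcd : c ≤ d) :
    ∫ x in a..b, ∫ y in c..d, f x y = ∫ y in c..d, ∫ x in a..b, f x y := by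
  simp only [integral_of_le hab, integral_of_le hcd]
  refine MeasureTheory.integral_integral_swap ?_
  rw [MeasureTheory.Measure.prod_restrict, ← MeasureTheory.Measure.volume_eq_prod]
  exact (hf.continuousOn.integrableOn_compact (isCompact_Icc.prod isCompact_Icc)).mono_set
    (Set.prod_mono Set.Ioc_subset_Icc_self Set.Ioc_subset_Icc_self)

theorem integral_comp_cos_mul_sin {g : ℝ → ℝ} (hg : Continuous g) :
    ∫ θ in (0:ℝ)..π, g (cos θ) * sin θ = ∫ u in (-1:ℝ)..1, g u := by
  have h := integral_comp_mul_deriv (a := 0) (b := π) (fun x _ => hasDerivAt_cos x)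
    continuous_sin.neg.continuousOn hg
  simp only [Function.comp_apply, mul_neg, integral_neg, cos_zero, cos_pi] at h
  rw [← neg_inj, h, integral_symm]

theorem integral_cos_int_mul_add (n : ℤ) (hn : n ≠ 0) (β : ℝ) :
    ∫ φ in (0:ℝ)..2 * π, cos (n * φ + β) = 0 := by
  rw [integral_comp_mul_add (fun x => cos x) (Int.cast_ne_zero.mpr hn), integral_cos, mul_zero,
    zero_add, add_comm, (sin_periodic.int_mul n) β, sub_self, smul_zero]

theorem integral_cos_int_mul_add_mul_cos (m n : ℤ) (a b : ℝ) :
    ∫ φ in (0:ℝ)..2 * π, cos (m * φ + a) * cos (n * φ + b) =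
      ((∫ φ in (0:ℝ)..2 * π, cos ((m + n : ℤ) * φ + (a + b))) +
        ∫ φ in (0:ℝ)..2 * π, cos ((m - n : ℤ) * φ + (a - b))) / 2 := by
  rw [← integral_add (by apply Continuous.intervalIntegrable; fun_prop)
    (by apply Continuous.intervalIntegrable; fun_prop), ← integral_div]
  congr 1 with φ
  push_cast
  rw [show (m + n : ℝ) * φ + (a + b) = (m * φ + a) + (n * φ + b) by ring,
    show (m - n : ℝ) * φ + (a - b) = (m * φ + a) - (n * φ + b) by ring,
    cos_add (m * φ + a), cos_sub (m * φ + a)]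
  ring

theorem integral_cos_int_mul_add_mul_cos_of_ne {m n : ℤ} (hadd : m + n ≠ 0) (hsub : m - n ≠ 0)
    (a b : ℝ) : ∫ φ in (0:ℝ)..2 * π, cos (m * φ + a) * cos (n * φ + b) = 0 := by
  rw [integral_cos_int_mul_add_mul_cos, integral_cos_int_mul_add _ hadd,
    integral_cos_int_mul_add _ hsub, add_zero, zero_div]

theorem integral_cos_int_mul_add_mul_cos_self {n : ℤ} (hn : n ≠ 0) (a b : ℝ) :
    ∫ φ in (0:ℝ)..2 * π, cos (n * φ + a) * cos (n * φ + b) = π * cos (a - b) := by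
  rw [integral_cos_int_mul_add_mul_cos, integral_cos_int_mul_add _ (by omega), sub_self]
  simp only [Int.cast_zero, zero_mul, zero_add, integral_const, smul_eq_mul]
  ring

theorem cube_add_cos_add_cos_two_mul (m : ℤ) (X Y Z a b φ : ℝ) :
    (X + Y * cos (m * φ + a) + Z * cos (2 * m * φ + b)) ^ 3 =
      (X ^ 3 + 3 / 2 * X * (Y ^ 2 + Z ^ 2))
      + (3 * X ^ 2 * Y + Y ^ 3 / 2 + 3 / 2 * Y * Z ^ 2) * cos (m * φ + a)
      + (3 * X ^ 2 * Z + 3 / 2 * Y ^ 2 * Z + Z ^ 3 / 2) * cos ((2 * m : ℤ) * φ + b)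
      + 3 / 2 * X * Y ^ 2 * cos ((2 * m : ℤ) * φ + 2 * a)
      + 3 / 2 * X * Z ^ 2 * cos ((4 * m : ℤ) * φ + 2 * b)
      + 6 * X * Y * Z * (cos (m * φ + a) * cos ((2 * m : ℤ) * φ + b))
      + Y ^ 3 / 2 * (cos (m * φ + a) * cos ((2 * m : ℤ) * φ + 2 * a))
      + 3 / 2 * Y ^ 2 * Z * (cos ((2 * m : ℤ) * φ + 2 * a) * cos ((2 * m : ℤ) * φ + b))
      + 3 / 2 * Y * Z ^ 2 * (cos (m * φ + a) * cos ((4 * m : ℤ) * φ + 2 * b))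
      + Z ^ 3 / 2 * (cos ((2 * m : ℤ) * φ + b) * cos ((4 * m : ℤ) * φ + 2 * b)) := by
  have hP := cos_sq (m * φ + a)
  have hQ := cos_sq (2 * m * φ + b)
  rw [show 2 * (m * φ + a) = 2 * m * φ + 2 * a by ring] at hP
  rw [show 2 * (2 * m * φ + b) = 4 * m * φ + 2 * b by ring] at hQ
  push_cast
  linear_combination
    (3 * X * Y ^ 2 + Y ^ 3 * cos (m * φ + a) + 3 * Y ^ 2 * Z * cos (2 * m * φ + b)) * hP
      + (3 * X * Z ^ 2 + 3 * Y * Z ^ 2 * cos (m * φ + a) + Z ^ 3 * cos (2 * m * φ + b)) * hQ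

theorem integral_cube_add_cos_add_cos_two_mul {m : ℤ} (hm : m ≠ 0) (X Y Z a b : ℝ) :
    ∫ φ in (0:ℝ)..2 * π, (X + Y * cos (m * φ + a) + Z * cos (2 * m * φ + b)) ^ 3 =
      π * (2 * X ^ 3 + 3 * X * (Y ^ 2 + Z ^ 2) + 3 / 2 * Y ^ 2 * Z * cos (2 * a - b)) := by
  simp only [cube_add_cos_add_cos_two_mul]
  simp (disch := first | omega | (apply Continuous.intervalIntegrable; fun_prop)) only
    [integral_add, integral_const_mul, integral_const, integral_cos_int_mul_add,
      integral_cos_int_mul_add_mul_cos_of_ne, integral_cos_int_mul_add_mul_cos_self, smul_eq_mul]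
  ring

/-- The longitude average of `ω³` as a polynomial in `u = cos θ`, up to the factor `π`. -/
def zonalCubic (Ω a b d c u : ℝ) : ℝ :=
  2 * (Ω * u + a * (3 * u ^ 2 - 1)) ^ 3
    + 3 * (Ω * u + a * (3 * u ^ 2 - 1)) * (4 * b ^ 2 * u ^ 2 * (1 - u ^ 2) + d ^ 2 * (1 - u ^ 2) ^ 2)
    + 6 * c * b ^ 2 * d * u ^ 2 * (1 - u ^ 2) ^ 2

theorem integral_zonalCubic (Ω a b d c : ℝ) :
    ∫ u in (-1:ℝ)..1, zonalCubic Ω a b d c u =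
      16 * Ω ^ 2 * a / 5 + (64 * a ^ 3 + 32 * a * b ^ 2 - 64 * a * d ^ 2 + 32 * c * b ^ 2 * d) / 35 := by
  unfold zonalCubic
  ring_nf
  -- `(f := fun x => x)`: simp does not unify `?f x` with a bare bound variable
  simp (disch := (apply Continuous.intervalIntegrable; fun_prop)) only
    [integral_add, integral_sub, integral_const_mul (f := fun x => x), integral_const_mul,
      integral_mul_const, integral_pow, integral_id, integral_const]
  norm_num
  ring

theorem integral_vortZ_cube_mul_sin_longitude (Ω A B D α θ : ℝ) :
    ∫ φ in (0:ℝ)..2 * π, vortZ Ω A B D α θ φ ^ 3 * sin θ =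
      π * zonalCubic Ω (A * √(5 / (16 * π))) (B * √(15 / (16 * π))) (D * √(15 / (16 * π)))
        (cos (2 * α)) (cos θ) * sin θ := by
  set a := A * √(5 / (16 * π))
  set b := B * √(15 / (16 * π))
  set d := D * √(15 / (16 * π))
  have hv (φ : ℝ) : vortZ Ω A B D α θ φ = (Ω * cos θ + a * (3 * cos θ ^ 2 - 1))
      + b * sin (2 * θ) * cos (((1 : ℤ) : ℝ) * φ + α)
      + d * sin θ ^ 2 * cos (2 * ((1 : ℤ) : ℝ) * φ + 0) := by
    simp only [vortZ, Int.cast_one, one_mul, mul_one, add_zero]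
    ring
  have hY : (b * sin (2 * θ)) ^ 2 = 4 * b ^ 2 * cos θ ^ 2 * (1 - cos θ ^ 2) := by
    rw [sin_two_mul, ← sin_sq]
    ring
  simp only [hv]
  rw [integral_mul_const, integral_cube_add_cos_add_cos_two_mul one_ne_zero, hY, sin_sq, sub_zero,
    zonalCubic]
  ring

theorem sqrt_fifteen_div_sixteen_mul_pi :
    √(15 / (16 * π)) = √3 * √(5 / (16 * π)) := by
  rw [← sqrt_mul zero_le_three]
  ring_nf

theorem sqrt_five_mul_pi_eq :
    √(5 * π) = 5 / (4 * √(5 / (16 * π))) := by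
  rw [eq_div_iff (by positivity), mul_left_comm, ← sqrt_mul (by positivity),
    show 5 * π * (5 / (16 * π)) = (5 / 4) ^ 2 by field_simp; ring, sqrt_sq (by norm_num)]
  norm_num

theorem pi_mul_zonal_moments_eq (Ω A B D c : ℝ) :
    π * (16 * Ω ^ 2 * (A * √(5 / (16 * π))) / 5
      + (64 * (A * √(5 / (16 * π))) ^ 3
        + 32 * (A * √(5 / (16 * π))) * (B * √(15 / (16 * π))) ^ 2
        - 64 * (A * √(5 / (16 * π))) * (D * √(15 / (16 * π))) ^ 2
        + 32 * c * (B * √(15 / (16 * π))) ^ 2 * (D * √(15 / (16 * π)))) / 35) =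
      (A * (10 * A ^ 2 + 15 * B ^ 2 - 30 * D ^ 2 + 56 * Ω ^ 2 * π) + 15 * √3 * B ^ 2 * D * c) /
        (14 * √(5 * π)) := by
  rw [sqrt_fifteen_div_sixteen_mul_pi, sqrt_five_mul_pi_eq]
  have hπ : π = 5 / (16 * √(5 / (16 * π)) ^ 2) := by
    rw [sq_sqrt (by positivity)]
    field_simp
  have hk : 0 < √(5 / (16 * π)) := by positivity
  have h3 : √3 ^ 2 = 3 := sq_sqrt zero_le_three
  generalize √(5 / (16 * π)) = k at hπ hk
  rw [hπ]
  field_simp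
  linear_combination 11200 * k ^ 2 * (A * B ^ 2 - 2 * A * D ^ 2 + √3 * B ^ 2 * D * c) * h3

/-- **The cubic Casimir `C₃` in the zonal-case representation.** -/
theorem stmt14 (Ω A B D α : ℝ) :
    (∫ φ in (0:ℝ)..(2 * π), ∫ θ in (0:ℝ)..π,
      (vortZ Ω A B D α θ φ) ^ 3 * Real.sin θ) =
    (A * (10 * A ^ 2 + 15 * B ^ 2 - 30 * D ^ 2 + 56 * Ω ^ 2 * π) +
      15 * Real.sqrt 3 * B ^ 2 * D * Real.cos (2 * α)) /
    (14 * Real.sqrt (5 * π)) := by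
  calc _ = ∫ θ in (0:ℝ)..π, ∫ φ in (0:ℝ)..2 * π, vortZ Ω A B D α θ φ ^ 3 * sin θ :=
        intervalIntegral_integral_swap_of_continuous (by unfold vortZ; fun_prop)
          two_pi_pos.le pi_pos.le
    _ = π * ∫ u in (-1:ℝ)..1, zonalCubic Ω (A * √(5 / (16 * π))) (B * √(15 / (16 * π)))
          (D * √(15 / (16 * π))) (cos (2 * α)) u := by
        simp only [integral_vortZ_cube_mul_sin_longitude, mul_assoc, integral_const_mul]
        rw [integral_comp_cos_mul_sin (by unfold zonalCubic; fun_prop)]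
    _ = _ := by
        rw [integral_zonalCubic, pi_mul_zonal_moments_eq]
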